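/- Let (W,S) be a Coxeter group, Γ an abelian group with total order specified by Γ₊, and parameters {v_s} ⊆ Γ₊. Let y ≤ w in W, I = [y,w] the Bruhat interval, and s ∈ S. Suppose σ: ℤ[Γ] → ℤ[v,v^{−1}] is a ring homomorphism with σ(v_s) = v^{L(s)} for a weight function L, such that σ(Γ₊^s(I)) ⊆ {v^n : n > 0}, where Γ₊^s(I) is the set of elements of Γ₊ arising from: inverses of monomials occurring in the P-polynomials P_{z₁,z₂} for z₁ < z₂ in I; successive quotients γ_{i−1}^{−1}γ_i of monomials occurring in M-polynomials M^s_{z₁,z₂} for z₁, z₂ ∈ I; and inverses of monomials occurring in Σ_{z: z₁ ≤ z < z₂, sz < z} P_{z₁,z} M^s_{z,z₂} − v_s P_{z₁,z₂} for z₁, z₂ ∈ I with sz₁ < z₁ < z₂ < sz₂. Then σ(P_{z₁,z₂}) equals the Kazhdan–Lusztig polynomial of the weight function L for all z₁ < z₂ in I, and σ(M^s_{z₁,z₂}) equals the corresponding M-polynomial whenever sz₁ < z₁ < z₂ < sz₂; in particular M^s_{z₁,z₂} ≠ 0 in ℤ[Γ] implies the specialized M-polynomial is nonzero. -/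

import Mathlib

/-- The Bruhat order on a Coxeter group: `y ≤ w` iff some (equivalently, every) reduced word
for `w` has a subword which is a word for `y`. -/
def bruhatLE {B W : Type*} [Group W] {M : CoxeterMatrix B} (cs : CoxeterSystem M W)
    (y w : W) : Prop :=
  ∃ ω : List B, cs.IsReduced ω ∧ cs.wordProd ω = w ∧
    ∃ υ : List B, υ.Sublist ω ∧ cs.wordProd υ = y

/-- The family `r : W × W → A` is a family of R-polynomials for the Coxeter system `cs` with
parameters `v b` (with designated inverses `vinv b`): `r y y = 1`, `r y w = 0` unless
`y ≤ w` in the Bruhat order, and for a simple reflection `s = s_b` with `sw < w`: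
`r y w = r (sy) (sw)` if `sy < y`, and `r y w = r (sy) (sw) + (v_s − v_s⁻¹) r y (sw)`
if `sy > y`. -/
def IsRPolFamily {B W : Type*} [Group W] {M : CoxeterMatrix B} (cs : CoxeterSystem M W)
    {A : Type*} [CommRing A] (v vinv : B → A) (r : W → W → A) : Prop :=
  (∀ b, v b * vinv b = 1) ∧
  (∀ y, r y y = 1) ∧
  (∀ y w, ¬ bruhatLE cs y w → r y w = 0) ∧
  (∀ (b : B) (y w : W), cs.length (cs.simple b * w) < cs.length w →
    (cs.length (cs.simple b * y) < cs.length y →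
      r y w = r (cs.simple b * y) (cs.simple b * w)) ∧
    (cs.length y < cs.length (cs.simple b * y) →
      r y w = r (cs.simple b * y) (cs.simple b * w)
        + (v b - vinv b) * r y (cs.simple b * w)))

open MonoidAlgebra LaurentPolynomial
open scoped Classical

/-- `P` is a positive cone specifying a total order on the abelian group `Γ`. -/
def IsPositiveCone {Γ : Type*} [CommGroup Γ] (P : Set Γ) : Prop :=
  (∀ g h, g ∈ P → h ∈ P → g * h ∈ P) ∧
  (∀ g : Γ, g ∈ P ∨ g = 1 ∨ g⁻¹ ∈ P) ∧
  (1 : Γ) ∉ P ∧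
  (∀ g : Γ, g ∈ P → g⁻¹ ∉ P)

/-- `P` is a family of (generalized) Kazhdan–Lusztig polynomials for the Coxeter system `cs`,
relative to the R-polynomials `rp`, the bar involution `bar` and the predicate `neg`
("lies in `ℤ[Γ₋]`"): `P w w = 1`, `P y w = 0` unless `y ≤ w`, `P y w ∈ ℤ[Γ₋]` for `y < w`,
and `bar (P x w) = Σ_{x ≤ y ≤ w} r x y * P y w`. -/
def IsKLFamily {B W : Type*} [Group W] {M : CoxeterMatrix B} (cs : CoxeterSystem M W)
    {A : Type*} [CommRing A] (bar : A →+* A) (neg : A → Prop)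
    (rp P : W → W → A)
    (hfin : ∀ x w : W, {y : W | bruhatLE cs x y ∧ bruhatLE cs y w}.Finite) : Prop :=
  (∀ w, P w w = 1) ∧
  (∀ y w, ¬ bruhatLE cs y w → P y w = 0) ∧
  (∀ y w, bruhatLE cs y w → y ≠ w → neg (P y w)) ∧
  (∀ x w, bruhatLE cs x w → bar (P x w) = ∑ y ∈ (hfin x w).toFinset, rp x y * P y w)

/-- `Mp` is a family of M-polynomials for the simple reflection `s = s_b`, relative to the
Kazhdan–Lusztig family `P`, the parameter `vsb = v_s`, the bar involution and the predicate
`neg` ("lies in `ℤ[Γ₋]`"): each `M^s_{y,w}` is bar-invariant, and for `sy < y < w < sw`,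
`(Σ_{z : y ≤ z < w, sz < z} P_{y,z} M^s_{z,w}) − v_s P_{y,w}` lies in `ℤ[Γ₋]`. -/
def IsMFamily {B W : Type*} [Group W] {M : CoxeterMatrix B} (cs : CoxeterSystem M W)
    {A : Type*} [CommRing A] (bar : A →+* A) (neg : A → Prop) (vsb : A) (b : B)
    (P Mp : W → W → A)
    (hfin : ∀ x w : W, {y : W | bruhatLE cs x y ∧ bruhatLE cs y w}.Finite) : Prop :=
  (∀ y w, bar (Mp y w) = Mp y w) ∧
  (∀ y w, cs.length (cs.simple b * y) < cs.length y →
    bruhatLE cs y w → y ≠ w → cs.length w < cs.length (cs.simple b * w) →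
    neg ((∑ z ∈ (hfin y w).toFinset.filter
        (fun z => z ≠ w ∧ cs.length (cs.simple b * z) < cs.length z),
        P y z * Mp z w) - vsb * P y w))


namespace StmtAux

open List CoxeterSystem
open scoped Classical



variable {B W : Type*} [Group W] {M : CoxeterMatrix B} (cs : CoxeterSystem M W)

local prefix:100 "s" => cs.simple
local prefix:100 "π" => cs.wordProd
local prefix:100 "ℓ" => cs.length
local prefix:100 "ris" => cs.rightInvSeq

/-- indicator -/
noncomputable def ind (t x : W) : ZMod 2 := if x = t then 1 else 0

lemma ind_add_self (t x : W) : ind t x + ind t x = 0 := by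
  unfold ind; split <;> decide

/-- parity count of `t` in the right inversion sequence -/
noncomputable def nn (ω : List B) (t : W) : ZMod 2 := ((ris ω).map (ind t)).sum

@[simp] lemma nn_nil (t : W) : nn cs [] t = 0 := by simp [nn]

lemma nn_cons (i : B) (ω : List B) (t : W) :
    nn cs (i :: ω) t = ind t ((π ω)⁻¹ * (s i) * (π ω)) + nn cs ω t := by
  simp [nn, rightInvSeq]

lemma simple_conj_conj (i : B) (x : W) : s i * (s i * x * s i) * s i = x := by
  calc s i * (s i * x * s i) * s i = (s i * s i) * x * (s i * s i) := by group
  _ = x := by rw [cs.simple_mul_simple_self]; group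

lemma ind_simple_conj (i : B) (x : W) : ind (s i) (s i * x * s i) = ind (s i) x := by
  unfold ind
  congr 1
  simp only [eq_iff_iff]
  constructor
  · intro h; have := congrArg (fun z => s i * z * s i) h
    rw [simple_conj_conj cs] at this
    rw [this]
    calc s i * s i * s i = (s i * s i) * s i := by group
    _ = s i := by rw [cs.simple_mul_simple_self]; group
  · intro h; rw [h]
    calc s i * s i * s i = (s i * s i) * s i := by group
    _ = s i := by rw [cs.simple_mul_simple_self]; group

/-- the basic parity permutation -/
noncomputable def eta (i : B) : Equiv.Perm (W × ZMod 2) where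
  toFun p := (s i * p.1 * s i, p.2 + ind (s i) p.1)
  invFun p := (s i * p.1 * s i, p.2 + ind (s i) p.1)
  left_inv := by
    intro p
    simp only [Prod.ext_iff]
    refine ⟨simple_conj_conj cs i p.1, ?_⟩
    show p.2 + ind (s i) p.1 + ind (s i) (s i * p.1 * s i) = p.2
    rw [ind_simple_conj cs, add_assoc, ind_add_self, add_zero]
  right_inv := by
    intro p
    simp only [Prod.ext_iff]
    refine ⟨simple_conj_conj cs i p.1, ?_⟩
    show p.2 + ind (s i) p.1 + ind (s i) (s i * p.1 * s i) = p.2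
    rw [ind_simple_conj cs, add_assoc, ind_add_self, add_zero]

lemma eta_apply (i : B) (p : W × ZMod 2) :
    eta cs i p = (s i * p.1 * s i, p.2 + ind (s i) p.1) := rfl

/-- evaluation of a product of `eta`s -/
lemma prod_eta_apply (ω : List B) (p : W × ZMod 2) :
    (ω.map (eta cs)).prod p = (π ω * p.1 * (π ω)⁻¹, p.2 + nn cs ω p.1) := by
  induction ω with
  | nil => simp [nn]
  | cons i ω ih =>
      have : ((i :: ω).map (eta cs)).prod = eta cs i * (ω.map (eta cs)).prod := by
        simp
      rw [this]
      show eta cs i ((ω.map (eta cs)).prod p) = _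
      rw [ih, eta_apply]
      rw [nn_cons]
      simp only [Prod.mk.injEq]
      refine ⟨?_, ?_⟩
      · rw [cs.wordProd_cons]
        rw [mul_inv_rev, cs.inv_simple]
        group
      · show p.2 + nn cs ω p.1 + ind (s i) (π ω * p.1 * (π ω)⁻¹) = p.2 + (ind p.1 ((π ω)⁻¹ * s i * π ω) + nn cs ω p.1)
        have hcond : ind (s i) (π ω * p.1 * (π ω)⁻¹) = ind p.1 ((π ω)⁻¹ * s i * π ω) := by
          unfold ind
          congr 1
          simp only [eq_iff_iff]
          constructor
          · intro h; rw [← h]; group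
          · intro h; rw [← h]; group
        rw [hcond]; ring
  

/-- successive quotient of alternating word products -/
noncomputable def DD (i i' : B) (n : ℕ) : W :=
    (π (alternatingWord i i' n))⁻¹ * π (alternatingWord i i' (n+1))

lemma DD_formula (i i' : B) (n : ℕ) :
    DD cs i i' n = (s i * s i') ^ (-((n/2 : ℕ) : ℤ)) * s i' * (s i * s i') ^ ((((n+1)/2 : ℕ)) : ℤ) := by
  unfold DD
  rw [cs.prod_alternatingWord_eq_mul_pow, cs.prod_alternatingWord_eq_mul_pow]
  rcases Nat.even_or_odd n with he | ho
  · have h1 : ¬ Even (n+1) := by simp [Nat.even_add_one, he]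
    have h2 : (n+1)/2 = n/2 := by
      have := Nat.even_iff.mp he; omega
    rw [if_pos he, if_neg h1, h2]; simp only [zpow_neg, zpow_natCast]
    group
  · have h1 : ¬ Even n := by
      rw [Nat.not_even_iff_odd]; exact ho
    have h2 : Even (n+1) := by
      rcases ho with ⟨k, hk⟩; exact ⟨k+1, by omega⟩
    rw [if_neg h1, if_pos h2]; simp only [zpow_neg, zpow_natCast]
    rw [mul_inv_rev, cs.inv_simple]
    group

lemma conj_pow_simple (i i' : B) (k : ℤ) :
    s i' * (s i * s i') ^ k * s i' = (s i * s i') ^ (-k) := by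
  have h1 : s i' * (s i * s i') * (s i')⁻¹ = (s i * s i')⁻¹ := by
    rw [cs.inv_simple, mul_inv_rev, cs.inv_simple, cs.inv_simple]
    calc s i' * (s i * s i') * s i' = s i' * s i * (s i' * s i') := by group
    _ = s i' * s i := by rw [cs.simple_mul_simple_self]; group
  calc s i' * (s i * s i') ^ k * s i'
      = (MulAut.conj (s i')) ((s i * s i') ^ k) := by
        rw [MulAut.conj_apply, cs.inv_simple]
    _ = ((MulAut.conj (s i')) (s i * s i')) ^ k := by rw [map_zpow]
    _ = ((s i * s i')⁻¹) ^ k := by rw [MulAut.conj_apply, h1]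
    _ = (s i * s i') ^ (-k) := by rw [← zpow_neg_one, ← zpow_mul]; congr 1; omega

lemma alg_period {b p : W} (m : ℕ) (hpm : p ^ (m:ℤ) = 1)
    (hconj : ∀ k : ℤ, b * p ^ k * b = p ^ (-k))
    (e1 f1 e2 f2 : ℤ) (h1 : e1 + f1 = e2 + f2 + m) :
    p ^ (-e1) * b * p ^ f1 = p ^ (-e2) * b * p ^ f2 := by
  set α : ℤ := e1 - e2 with hα
  have hsplit : p ^ (-e1) = p ^ (-e2) * p ^ (-α) := by
    rw [← zpow_add]; congr 1; omega
  have hsplit2 : p ^ f1 = p ^ (-α) * (p ^ (m:ℤ) * p ^ f2) := by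
    rw [← zpow_add, ← zpow_add]; congr 1; omega
  have hmid : p ^ (-α) * b * p ^ (-α) = b := by
    calc p ^ (-α) * b * p ^ (-α) = p ^ (-α) * (b * p ^ (-α) * b) * b := by
          have hbb : b * b = 1 := by
            have := hconj 0
            simpa using this
          rw [mul_assoc, mul_assoc, mul_assoc, hbb, mul_one]
    _ = p ^ (-α) * p ^ α * b := by rw [hconj (-α), neg_neg]
    _ = b := by rw [← zpow_add]; simp
  calc p ^ (-e1) * b * p ^ f1
      = p ^ (-e2) * (p ^ (-α) * b * p ^ (-α)) * (p ^ (m:ℤ) * p ^ f2) := by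
        rw [hsplit, hsplit2]; group
    _ = p ^ (-e2) * b * (p ^ (m:ℤ) * p ^ f2) := by rw [hmid]
    _ = p ^ (-e2) * b * p ^ f2 := by rw [hpm]; group

lemma DD_periodic (i i' : B) (n : ℕ) : DD cs i i' (n + M i i') = DD cs i i' n := by
  rw [DD_formula, DD_formula]
  refine alg_period (M i i') ?_ (conj_pow_simple cs i i') _ _ _ _ ?_
  · rw [zpow_natCast]; exact cs.simple_mul_simple_pow i i'
  · push_cast
    omega



lemma nn_alt (i i' : B) (t : W) (N : ℕ) :
    nn cs (alternatingWord i i' N) t = ∑ n ∈ Finset.range N, ind t (DD cs i i' n) := by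
  induction N with
  | zero => simp [alternatingWord]
  | succ N ih =>
      rw [alternatingWord_succ']
      rw [nn_cons, ih, Finset.sum_range_succ]
      have hD : (π (alternatingWord i i' N))⁻¹ * s (if Even N then i' else i)
          * π (alternatingWord i i' N) = DD cs i i' N := by
        unfold DD
        rw [alternatingWord_succ', cs.wordProd_cons]
        group
      rw [hD]
      ring

lemma zmod2_add_self (a : ZMod 2) : a + a = 0 := by
  have h2 : (2 : ZMod 2) = 0 := by decide
  calc a + a = 2 * a := by ring
  _ = 0 := by rw [h2, zero_mul]

lemma nn_alt_braid (i i' : B) (t : W) :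
    nn cs (alternatingWord i i' (2 * M i i')) t = 0 := by
  rw [nn_alt]
  have hsplit : ∑ n ∈ Finset.range (2 * M i i'), ind t (DD cs i i' n)
      = ∑ n ∈ Finset.range (M i i'), ind t (DD cs i i' n)
        + ∑ n ∈ Finset.Ico (M i i') (2 * M i i'), ind t (DD cs i i' n) := by
    simp only [Finset.range_eq_Ico]
    exact (Finset.sum_Ico_consecutive (fun n => ind t (DD cs i i' n))
        (Nat.zero_le (M i i')) (show M i i' ≤ 2 * M i i' from by omega)).symm
  rw [hsplit, Finset.sum_Ico_eq_sum_range]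
  have heq : ∀ n ∈ Finset.range (M i i'),
      ind t (DD cs i i' (M i i' + n)) = ind t (DD cs i i' n) := by
    intro n _
    rw [Nat.add_comm, DD_periodic]
  rw [show 2 * M i i' - M i i' = M i i' from by omega]
  rw [Finset.sum_congr rfl heq]
  rw [← Finset.sum_add_distrib]
  rw [Finset.sum_congr rfl (fun n _ => zmod2_add_self _ )]
  simp

lemma prod_eta_alt (i i' : B) (m : ℕ) :
    ((alternatingWord i i' (2 * m)).map (eta cs)).prod = (eta cs i * eta cs i') ^ m := by
  induction m with
  | zero => simp [alternatingWord]
  | succ m ih =>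
      have h1 : alternatingWord i i' (2 * (m + 1)) = i :: i' :: alternatingWord i i' (2 * m) := by
        have e1 : 2 * (m + 1) = (2 * m + 1) + 1 := by ring
        rw [e1, alternatingWord_succ', alternatingWord_succ']
        have o1 : ¬ Even (2 * m + 1) := by simp [Nat.even_add_one]
        have o2 : Even (2 * m) := ⟨m, by ring⟩
        rw [if_neg o1, if_pos o2]
      rw [h1]
      simp only [List.map_cons, List.prod_cons]
      rw [ih, pow_succ']
      rw [← mul_assoc]

lemma eta_liftable : CoxeterMatrix.IsLiftable M (fun i => eta cs i) := by
  intro i i'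
  have h := prod_eta_alt cs i i' (M i i')
  have hprod1 : π (alternatingWord i i' (2 * M i i')) = 1 := by
    rw [cs.prod_alternatingWord_eq_mul_pow]
    have he : Even (2 * M i i') := ⟨M i i', by ring⟩
    rw [if_pos he]
    rw [show 2 * M i i' / 2 = M i i' from by omega]
    rw [one_mul]
    exact cs.simple_mul_simple_pow i i'
  ext p
  · show (((eta cs i * eta cs i') ^ M i i') p).1 = p.1
    rw [← h, prod_eta_apply, hprod1]
    simp
  · show (((eta cs i * eta cs i') ^ M i i') p).2 = p.2
    rw [← h, prod_eta_apply, nn_alt_braid]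
    simp

/-- the parity homomorphism -/
noncomputable def parityHom : W →* Equiv.Perm (W × ZMod 2) :=
  cs.lift ⟨fun i => eta cs i, eta_liftable cs⟩

lemma parityHom_wordProd (ω : List B) :
    parityHom cs (π ω) = (ω.map (eta cs)).prod := by
  unfold CoxeterSystem.wordProd
  rw [map_list_prod]
  rw [List.map_map]
  congr 1
  apply List.map_congr_left
  intro i _
  show (parityHom cs) (s i) = eta cs i
  exact cs.lift_apply_simple (eta_liftable cs) i

/-- parity of the number of occurrences of `t` as a right inversion -/
noncomputable def eps (w t : W) : ZMod 2 := ((parityHom cs w) (t, 0)).2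

lemma eps_eq_nn (ω : List B) (t : W) : eps cs (π ω) t = nn cs ω t := by
  unfold eps
  rw [parityHom_wordProd, prod_eta_apply]
  simp

lemma mem_ris_of_eps (ω : List B) (t : W) (h : eps cs (π ω) t = 1) :
    t ∈ cs.rightInvSeq ω := by
  by_contra hmem
  rw [eps_eq_nn] at h
  have : nn cs ω t = 0 := by
    apply List.sum_eq_zero
    intro x hx
    obtain ⟨y, hy, rfl⟩ := List.mem_map.mp hx
    have : y ≠ t := fun hc => hmem (hc ▸ hy)
    simp [ind, this]
  rw [this] at h
  exact absurd h (by decide)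

lemma ris_append (ω τ : List B) :
    cs.rightInvSeq (ω ++ τ)
      = (cs.rightInvSeq ω).map (fun x => (π τ)⁻¹ * x * π τ) ++ cs.rightInvSeq τ := by
  induction ω with
  | nil => simp [rightInvSeq]
  | cons i ω ih =>
      rw [List.cons_append, rightInvSeq, rightInvSeq, ih]
      simp only [List.map_cons, List.cons_append]
      congr 1
      rw [cs.wordProd_append, mul_inv_rev]
      group

lemma nn_append (ω τ : List B) (t : W) :
    nn cs (ω ++ τ) t
      = ((cs.rightInvSeq ω).map (fun x => ind t ((π τ)⁻¹ * x * π τ))).sum + nn cs τ t := by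
  unfold nn
  rw [ris_append]
  rw [List.map_append, List.sum_append, List.map_map]
  rfl

lemma lis_eq_map_conj (c : List B) :
    cs.leftInvSeq c = (cs.rightInvSeq c).map (fun x => (π c) * x * (π c)⁻¹) := by
  induction c with
  | nil => simp [leftInvSeq, rightInvSeq]
  | cons j c ih =>
      rw [leftInvSeq, rightInvSeq, ih]
      simp only [List.map_cons, List.map_map]
      congr 1
      · rw [cs.wordProd_cons]
        group
      · apply List.map_congr_left
        intro x _
        show s j * ((π c) * x * (π c)⁻¹) * (s j)⁻¹ = _
        rw [cs.wordProd_cons, mul_inv_rev]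
        group

lemma eps_mul_reflection (w t : W) (ht : cs.IsReflection t) :
    eps cs (w * t) t = eps cs w t + 1 := by
  obtain ⟨u, i, htui⟩ := ht
  obtain ⟨c, hc⟩ := cs.wordProd_surjective u
  obtain ⟨ω, hω⟩ := cs.wordProd_surjective w
  set τ : List B := c ++ (i :: c.reverse) with hτ
  have hπτ : π τ = t := by
    rw [hτ, cs.wordProd_append, cs.wordProd_cons, cs.wordProd_reverse, hc, htui]
    group
  have h1 : w * t = π (ω ++ τ) := by rw [cs.wordProd_append, hω, hπτ]
  rw [h1, eps_eq_nn, nn_append]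
  have h2 : ((cs.rightInvSeq ω).map (fun x => ind t ((π τ)⁻¹ * x * π τ))).sum = nn cs ω t := by
    unfold nn
    congr 1
    apply List.map_congr_left
    intro x _
    rw [hπτ]
    unfold ind
    congr 1
    simp only [eq_iff_iff]
    constructor
    · intro hh
      calc x = t * (t⁻¹ * x * t) * t⁻¹ := by group
      _ = t * t * t⁻¹ := by rw [hh]
      _ = t := by group
    · intro hh; rw [hh]; group
  rw [h2, ← hω, ← eps_eq_nn]
  congr 1
  -- now : nn cs τ t = 1
  have h3 : nn cs τ t
      = ((cs.rightInvSeq c).map (fun x => ind t ((π (i :: c.reverse))⁻¹ * x * π (i :: c.reverse)))).sum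
        + nn cs (i :: c.reverse) t := nn_append cs c _ t
  have hπic : π (i :: c.reverse) = s i * u⁻¹ := by
    rw [cs.wordProd_cons, cs.wordProd_reverse, hc]
  have h4 : nn cs (i :: c.reverse) t = 1 + nn cs c.reverse t := by
    rw [nn_cons]
    congr 1
    rw [cs.wordProd_reverse, hc]
    unfold ind
    rw [if_pos]
    rw [htui]
    group
  have h5 : ((cs.rightInvSeq c).map
      (fun x => ind t ((π (i :: c.reverse))⁻¹ * x * π (i :: c.reverse)))).sum = nn cs c (s i) := by
    unfold nn
    congr 1
    apply List.map_congr_left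
    intro x _
    rw [hπic]
    unfold ind
    congr 1
    simp only [eq_iff_iff]
    constructor
    · intro hh
      calc x = (s i * u⁻¹) * ((s i * u⁻¹)⁻¹ * x * (s i * u⁻¹)) * (s i * u⁻¹)⁻¹ := by group
      _ = (s i * u⁻¹) * t * (s i * u⁻¹)⁻¹ := by rw [hh]
      _ = (s i * u⁻¹) * (u * s i * u⁻¹) * (s i * u⁻¹)⁻¹ := by rw [htui]
      _ = s i := by group
    · intro hh; rw [hh, htui]; group
  have h7 : nn cs c.reverse t = nn cs c (s i) := by
    unfold nn
    rw [cs.rightInvSeq_reverse, lis_eq_map_conj cs c, List.map_reverse, List.sum_reverse,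
      List.map_map]
    congr 1
    apply List.map_congr_left
    intro x _
    show ind t ((π c) * x * (π c)⁻¹) = ind (s i) x
    rw [hc]
    unfold ind
    congr 1
    simp only [eq_iff_iff]
    constructor
    · intro hh
      calc x = u⁻¹ * (u * x * u⁻¹) * u := by group
      _ = u⁻¹ * t * u := by rw [hh]
      _ = u⁻¹ * (u * s i * u⁻¹) * u := by rw [htui]
      _ = s i := by group
    · intro hh; rw [hh, htui]
  rw [h3, h4, h5, h7]
  rw [show nn cs c (s i) + (1 + nn cs c (s i)) = 1 + (nn cs c (s i) + nn cs c (s i)) from by ring]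
  rw [zmod2_add_self, add_zero]


lemma zmod2_cases (a : ZMod 2) : a = 0 ∨ a = 1 := by
  revert a; decide

lemma eps_one_iff (w t : W) (ht : cs.IsReflection t) :
    eps cs w t = 1 ↔ ℓ (w * t) < ℓ w := by
  have dir1 : ∀ v : W, eps cs v t = 1 → ℓ (v * t) < ℓ v := by
    intro v hv
    obtain ⟨ω, hω1, hω2⟩ := cs.exists_reduced_word v
    have hred : cs.IsReduced ω := by
      unfold CoxeterSystem.IsReduced
      exact hω1
    have hmem : t ∈ cs.rightInvSeq ω := mem_ris_of_eps cs ω t (by rw [hω2] at hv; exact hv)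
    have := cs.isRightInversion_of_mem_rightInvSeq hred hmem
    rw [hω2]
    exact this.2
  constructor
  · exact dir1 w
  · intro hlt
    rcases zmod2_cases (eps cs w t) with h0 | h1
    · exfalso
      have h1' : eps cs (w * t) t = 1 := by
        rw [eps_mul_reflection cs w t ht, h0, zero_add]
      have := dir1 (w * t) h1'
      rw [mul_assoc, ht.mul_self, mul_one] at this
      omega
    · exact h1

/-- right strong exchange -/
lemma right_strong_exchange {w t : W} (ht : cs.IsReflection t) (hlt : ℓ (w * t) < ℓ w)
    {ω : List B} (hred : cs.IsReduced ω) (hw : π ω = w) :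
    ∃ j < ω.length, π (ω.eraseIdx j) = w * t := by
  have h1 : eps cs w t = 1 := (eps_one_iff cs w t ht).mpr hlt
  rw [← hw] at h1
  have hmem : t ∈ cs.rightInvSeq ω := mem_ris_of_eps cs ω t h1
  obtain ⟨j, hj, hjt⟩ := List.getElem_of_mem hmem
  rw [cs.length_rightInvSeq] at hj
  refine ⟨j, hj, ?_⟩
  have hD : (cs.rightInvSeq ω).getD j 1 = t := by
    rw [List.getD_eq_getElem?_getD]
    rw [List.getElem?_eq_getElem (by rw [cs.length_rightInvSeq]; exact hj)]
    simpa using hjt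
  rw [← hw, ← hD]
  exact (cs.wordProd_mul_getD_rightInvSeq ω j).symm

/-- left strong exchange, in sublist form -/
lemma left_strong_exchange {w t : W} (ht : cs.IsReflection t) (hlt : ℓ (t * w) < ℓ w)
    {ω : List B} (hred : cs.IsReduced ω) (hw : π ω = w) :
    ∃ υ : List B, υ.Sublist ω ∧ π υ = t * w ∧ υ.length + 1 = ω.length := by
  have hinv : ℓ (w⁻¹ * t) < ℓ (w⁻¹) := by
    have h1 : w⁻¹ * t = (t * w)⁻¹ := by rw [mul_inv_rev, ht.inv]
    rw [h1, cs.length_inv, cs.length_inv]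
    exact hlt
  have hredrev : cs.IsReduced ω.reverse := (cs.isReduced_reverse_iff ω).mpr hred
  have hwrev : π ω.reverse = w⁻¹ := by rw [cs.wordProd_reverse, hw]
  obtain ⟨j, hj, hje⟩ := right_strong_exchange cs ht hinv hredrev hwrev
  refine ⟨(ω.reverse.eraseIdx j).reverse, ?_, ?_, ?_⟩
  · have h2 : (ω.reverse.eraseIdx j).Sublist ω.reverse := List.eraseIdx_sublist _ j
    have h3 := h2.reverse
    rwa [List.reverse_reverse] at h3
  · rw [cs.wordProd_reverse, hje, mul_inv_rev, inv_inv, ht.inv]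
  · rw [List.length_reverse]
    have h5 := List.length_eraseIdx_add_one hj
    rw [h5, List.length_reverse]

/-- deletion: every word has a reduced sublist with the same product -/
lemma exists_reduced_sublist (υ : List B) :
    ∃ υ' : List B, υ'.Sublist υ ∧ π υ' = π υ ∧ cs.IsReduced υ' := by
  generalize hn : υ.length = n
  induction n using Nat.strong_induction_on generalizing υ with
  | _ n ih =>
  by_cases hred : cs.IsReduced υ
  · exact ⟨υ, List.Sublist.refl υ, rfl, hred⟩
  · -- find minimal non-reduced prefix
    have hex : ∃ k, ¬ cs.IsReduced (υ.take k) := by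
      refine ⟨υ.length, ?_⟩
      rwa [List.take_length]
    set k := Nat.find hex with hk
    have hknr : ¬ cs.IsReduced (υ.take k) := Nat.find_spec hex
    have hkpos : 0 < k := by
      rcases Nat.eq_zero_or_pos k with h0 | h
      · exfalso; apply hknr; rw [h0]
        simp [CoxeterSystem.IsReduced]
      · exact h
    have hkle : k ≤ υ.length := Nat.find_le (by rw [List.take_length]; exact hred)
    have hprev : cs.IsReduced (υ.take (k-1)) := by
      by_contra hc
      have := Nat.find_min hex (m := k - 1) (by omega)
      exact this hc
    set c := υ.take (k-1) with hc
    have hkk : k - 1 < υ.length := by omega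
    obtain ⟨a, ha⟩ : ∃ a, getElem? υ (k-1) = some a := ⟨getElem υ (k-1) hkk, by rw [List.getElem?_eq_getElem hkk]⟩
    have htake : υ.take k = c ++ [a] := by
      rw [hc, show k = (k-1) + 1 from by omega, List.take_succ, ha]
      rfl
    -- the length of π (take k) must go down
    have hlen_c : ℓ (π c) = c.length := hprev
    have hdrop : ℓ (π (υ.take k) ) < ℓ (π c) := by
      rcases cs.length_mul_simple (π c) a with hup | hdown
      · exfalso
        apply hknr
        unfold CoxeterSystem.IsReduced
        rw [htake, cs.wordProd_append, cs.wordProd_singleton, hup, List.length_append, hlen_c]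
        simp
      · rw [htake, cs.wordProd_append, cs.wordProd_singleton]
        omega
    have hsa : ℓ (π c * s a) < ℓ (π c) := by
      rw [htake, cs.wordProd_append, cs.wordProd_singleton] at hdrop
      exact hdrop
    obtain ⟨j, hj, hje⟩ := right_strong_exchange cs (cs.isReflection_simple a) hsa hprev rfl
    -- new word
    set υ'' := c.eraseIdx j ++ υ.drop k with hυ''
    have hπ : π υ'' = π υ := by
      rw [hυ'', cs.wordProd_append, hje]
      conv_rhs => rw [show υ = υ.take k ++ υ.drop k from (List.take_append_drop k υ).symm]
      rw [cs.wordProd_append, htake, cs.wordProd_append, cs.wordProd_singleton]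
    have hsub : υ''.Sublist υ := by
      rw [hυ'']
      conv_rhs => rw [show υ = υ.take k ++ υ.drop k from (List.take_append_drop k υ).symm]
      apply List.Sublist.append _ (List.Sublist.refl _)
      calc c.eraseIdx j <+ c := List.eraseIdx_sublist c j
      _ <+ υ.take k := by rw [htake]; exact (List.sublist_append_left c [a])
    have hlt : υ''.length < n := by
      have h1 : j < c.length := by
        rcases Nat.lt_or_ge j c.length with h | h
        · exact h
        · exfalso
          rw [List.eraseIdx_of_length_le h] at hje
          have hcontr : ℓ (π c * s a) = ℓ (π c) := by conv_lhs => rw [← hje]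
          omega
      have h2 := List.length_eraseIdx_add_one h1
      rw [hυ'', List.length_append, List.length_drop]
      have h3 : c.length ≤ k - 1 := by rw [hc, List.length_take]; omega
      omega
    obtain ⟨υ', hs1, hs2, hs3⟩ := ih υ''.length hlt υ'' rfl
    exact ⟨υ', hs1.trans hsub, by rw [hs2, hπ], hs3⟩

/-- the chain ("Bruhat") order via reflections -/
def cle (u w : W) : Prop :=
  Relation.ReflTransGen (fun x y => ∃ t, cs.IsReflection t ∧ y = t * x ∧ ℓ x < ℓ y) u w

lemma cle_refl (u : W) : cle cs u u := Relation.ReflTransGen.refl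

lemma cle_trans {u v w : W} (h1 : cle cs u v) (h2 : cle cs v w) : cle cs u w :=
  Relation.ReflTransGen.trans h1 h2

lemma cle_step_left {u : W} {t : W} (ht : cs.IsReflection t) (hlen : ℓ u < ℓ (t * u)) :
    cle cs u (t * u) :=
  Relation.ReflTransGen.single ⟨t, ht, rfl, hlen⟩

lemma cle_step_right {u : W} {t : W} (ht : cs.IsReflection t) (hlen : ℓ u < ℓ (u * t)) :
    cle cs u (u * t) := by
  have h1 : u * t = (u * t * u⁻¹) * u := by group
  have h2 : cs.IsReflection (u * t * u⁻¹) := ht.conj u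
  rw [h1]
  apply cle_step_left cs h2
  rw [← h1]
  exact hlen

lemma cle_length_le {u v : W} (h : cle cs u v) : ℓ u ≤ ℓ v := by
  induction h with
  | refl => exact le_refl _
  | tail h1 h2 ih =>
      obtain ⟨t, _, rfl, hlen⟩ := h2
      omega

/-- every reduced word of `v` contains a reduced word for everything below `v` -/
lemma cle_subword {u v : W} (h : cle cs u v) :
    ∀ ω : List B, cs.IsReduced ω → π ω = v →
      ∃ υ : List B, υ.Sublist ω ∧ π υ = u ∧ cs.IsReduced υ := by
  induction h using Relation.ReflTransGen.head_induction_on with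
  | refl =>
      intro ω hred hw
      exact ⟨ω, List.Sublist.refl ω, hw, hred⟩
  | head hstep htail ih =>
      rename_i u' x
      intro ω hred hw
      obtain ⟨τ, hτsub, hτπ, hτred⟩ := ih ω hred hw
      obtain ⟨t, htrefl, hxe, hlen⟩ := hstep
      -- u' = t * x reversed: x = t * u', so u' = t * x with ℓ(t x) < ℓ x
      have hx : u' = t * x := by
        rw [hxe]
        rw [← mul_assoc, htrefl.mul_self, one_mul]
      have hlen2 : ℓ (t * x) < ℓ x := by rw [← hx]; exact hlen
      obtain ⟨υ₀, hυ₀sub, hυ₀π, _⟩ := left_strong_exchange cs htrefl hlen2 hτred hτπ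
      obtain ⟨υ, h1, h2, h3⟩ := exists_reduced_sublist cs υ₀
      exact ⟨υ, (h1.trans hυ₀sub).trans hτsub, by rw [h2, hυ₀π, hx], h3⟩


/-- a sublist of a reduced word lies below it in the chain order -/
lemma cle_of_sublist : ∀ n : ℕ, ∀ ω υ : List B, ω.length ≤ n → cs.IsReduced ω →
    υ.Sublist ω → cle cs (π υ) (π ω) := by
  intro n
  induction n using Nat.strong_induction_on with
  | _ n ih =>
  -- inner lifting property
  have llp : ∀ u v : W, cle cs u v → ℓ v < n → ∀ b : B,
      ℓ (s b * u) = ℓ u + 1 → ℓ (s b * v) = ℓ v + 1 → cle cs (s b * u) (s b * v) := by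
    intro u v hcle
    induction hcle using Relation.ReflTransGen.head_induction_on with
    | refl => intro _ b _ _; exact cle_refl cs _
    | head hstep htail ih2 =>
        rename_i u' x
        intro hv b hbu hbv
        obtain ⟨t, ht, hxe, hlen⟩ := hstep
        rcases cs.length_simple_mul x b with hxup | hxdown
        · have h1 : cle cs (s b * x) (s b * v) := ih2 hv b hxup hbv
          have h2 : cle cs (s b * u') (s b * x) := by
            have hconj : cs.IsReflection (s b * t * s b) := by
              have := ht.conj (s b)
              rwa [cs.inv_simple] at this
            have heq : s b * x = (s b * t * s b) * (s b * u') := by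
              rw [hxe, show (s b * t * s b) * (s b * u') = s b * t * (s b * s b) * u' from by
                group, cs.simple_mul_simple_self]
              group
            have hlen3 : ℓ (s b * u') < ℓ (s b * x) := by omega
            rw [heq]
            apply cle_step_left cs hconj
            rw [← heq]
            exact hlen3
          exact cle_trans cs h2 h1
        · by_cases hxu : x = s b * u'
          · have h3 : cle cs (s b * u') v := by rw [← hxu]; exact htail
            have h4 : cle cs v (s b * v) := cle_step_left cs (cs.isReflection_simple b) (by omega)
            exact cle_trans cs h3 h4
          · -- witness argument
            have hℓx : ℓ x ≤ ℓ v := cle_length_le cs htail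
            obtain ⟨ρ, hρlen, hρeq⟩ := cs.exists_reduced_word (s b * x)
            have hπbρ : π (b :: ρ) = x := by
              rw [cs.wordProd_cons, ← hρeq, ← mul_assoc, cs.simple_mul_simple_self, one_mul]
            have hredbρ : cs.IsReduced (b :: ρ) := by
              unfold CoxeterSystem.IsReduced
              rw [hπbρ, List.length_cons, ← hρlen.eq, ← hρeq]
              omega
            have hcleux : cle cs u' x := Relation.ReflTransGen.single ⟨t, ht, hxe, hlen⟩
            obtain ⟨υ', hυ'sub, hυ'π, hυ'red⟩ := cle_subword cs hcleux (b :: ρ) hredbρ hπbρ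
            cases hυ'sub with
            | cons _ hsubρ =>
                -- υ' <+ ρ ; use outer induction on the word b :: ρ
                have hlenword : (b :: ρ).length < n := by
                  have : ℓ (π (b :: ρ)) = (b :: ρ).length := hredbρ
                  rw [hπbρ] at this
                  omega
                have h5 : cle cs (π (b :: υ')) (π (b :: ρ)) :=
                  ih (b :: ρ).length hlenword (b :: ρ) (b :: υ') (le_refl _) hredbρ
                    (List.Sublist.cons₂ b hsubρ)
                rw [hπbρ] at h5
                rw [cs.wordProd_cons, hυ'π] at h5
                have h6 : cle cs v (s b * v) :=
                  cle_step_left cs (cs.isReflection_simple b) (by omega)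
                exact cle_trans cs h5 (cle_trans cs htail h6)
            | cons_cons _ hsubρ =>
                -- υ' = b :: υ₁ : contradiction with ℓ (s b * u') = ℓ u' + 1
                exfalso
                rename_i υ₁
                have hu'eq : u' = s b * π υ₁ := by rw [← hυ'π, cs.wordProd_cons]
                have h7 : ℓ (s b * u') = ℓ (π υ₁) := by
                  rw [hu'eq, ← mul_assoc, cs.simple_mul_simple_self, one_mul]
                have h8 : ℓ (π υ₁) ≤ υ₁.length := cs.length_wordProd_le υ₁
                have h9 : ℓ u' = υ₁.length + 1 := by
                  have h10 : ℓ (π (b :: υ₁)) = (b :: υ₁).length := hυ'red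
                  rw [hυ'π] at h10
                  rw [h10, List.length_cons]
                omega
  -- main case analysis
  intro ω υ hn hred hsub
  cases ω with
  | nil =>
      have : υ = [] := List.sublist_nil.mp hsub
      rw [this]
      exact cle_refl cs _
  | cons a ω₁ =>
      have hred₁ : cs.IsReduced ω₁ := by
        have := CoxeterSystem.IsReduced.drop hred 1
        simpa using this
      have hl : ℓ (π (a :: ω₁)) = ω₁.length + 1 := by
        have := hred; unfold CoxeterSystem.IsReduced at this; rw [this, List.length_cons]
      have hl₁ : ℓ (π ω₁) = ω₁.length := hred₁
      have hstep : cle cs (π ω₁) (π (a :: ω₁)) := by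
        rw [cs.wordProd_cons]
        apply cle_step_left cs (cs.isReflection_simple a)
        rw [← cs.wordProd_cons]
        omega
      cases hsub with
      | cons _ hsubtail =>
          have h1 : cle cs (π υ) (π ω₁) :=
            ih ω₁.length (by simp at hn; omega) ω₁ υ (le_refl _) hred₁ hsubtail
          exact cle_trans cs h1 hstep
      | cons_cons _ hsubtail =>
          rename_i υ₁
          have h1 : cle cs (π υ₁) (π ω₁) :=
            ih ω₁.length (by simp at hn; omega) ω₁ υ₁ (le_refl _) hred₁ hsubtail
          rcases cs.length_simple_mul (π υ₁) a with hup | hdown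
          · -- lifting
            have h2 := llp (π υ₁) (π ω₁) h1
              (by rw [hl₁]; have hn' := hn; simp only [List.length_cons] at hn'; omega) a hup
              (by rw [← cs.wordProd_cons]; omega)
            rw [← cs.wordProd_cons, ← cs.wordProd_cons] at h2
            exact h2
          · -- π υ = s a * π υ₁ goes down
            have h3 : cle cs (s a * π υ₁) (π υ₁) := by
              have heq : π υ₁ = s a * (s a * π υ₁) := by
                rw [← mul_assoc, cs.simple_mul_simple_self, one_mul]
              conv_rhs => rw [heq]
              apply cle_step_left cs (cs.isReflection_simple a)
              rw [← mul_assoc, cs.simple_mul_simple_self, one_mul]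
              omega
            rw [cs.wordProd_cons]
            exact cle_trans cs h3 (cle_trans cs h1 hstep)



lemma bruhatLE_of_cle {u w : W} (h : cle cs u w) : bruhatLE cs u w := by
  obtain ⟨ω, hred, hw⟩ := cs.exists_reduced_word' w
  obtain ⟨υ, hsub, hπ, _⟩ := cle_subword cs h ω hred hw.symm
  exact ⟨ω, hred, hw.symm, υ, hsub, hπ⟩

lemma cle_of_bruhatLE {u w : W} (h : bruhatLE cs u w) : cle cs u w := by
  obtain ⟨ω, hred, hw, υ, hsub, hπ⟩ := h
  have := cle_of_sublist cs ω.length ω υ (le_refl _) hred hsub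
  rwa [hw, hπ] at this

lemma bruhat_refl (u : W) : bruhatLE cs u u := by
  obtain ⟨ω, hred, hw⟩ := cs.exists_reduced_word' u
  exact ⟨ω, hred, hw.symm, ω, List.Sublist.refl ω, hw.symm⟩

lemma bruhat_trans {u v w : W} (h1 : bruhatLE cs u v) (h2 : bruhatLE cs v w) :
    bruhatLE cs u w :=
  bruhatLE_of_cle cs (cle_trans cs (cle_of_bruhatLE cs h1) (cle_of_bruhatLE cs h2))

lemma bruhat_length_lt {u w : W} (h : bruhatLE cs u w) (hne : u ≠ w) : ℓ u < ℓ w := by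
  have hc := cle_of_bruhatLE cs h
  rcases Relation.ReflTransGen.cases_head hc with heq | ⟨c, hstep, htail⟩
  · exact absurd heq hne
  · obtain ⟨t, _, rfl, hlen⟩ := hstep
    have := cle_length_le cs htail
    omega

lemma bruhat_le_one {u : W} (h : bruhatLE cs u 1) : u = 1 := by
  by_contra hne
  have := bruhat_length_lt cs h hne
  have h1 : ℓ (1 : W) = 0 := cs.length_one
  omega

section Spec

variable {Γ : Type*} [CommGroup Γ]

lemma T_inj {a a' : ℤ} (h : (LaurentPolynomial.T a : LaurentPolynomial ℤ) = LaurentPolynomial.T a') :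
    a = a' := by
  by_contra hne
  have h1 : (LaurentPolynomial.T a : LaurentPolynomial ℤ).coeff a = 1 := by
    rw [LaurentPolynomial.T_apply, if_pos rfl]
  have hne' : a' ≠ a := fun hc => hne hc.symm
  rw [h, LaurentPolynomial.T_apply, if_neg hne'] at h1
  exact one_ne_zero h1.symm

lemma single_eq_smul_of (g : Γ) (c : ℤ) :
    (MonoidAlgebra.single g c : MonoidAlgebra ℤ Γ) = c • MonoidAlgebra.of ℤ Γ g := by
  rw [MonoidAlgebra.of_apply, MonoidAlgebra.smul_single]
  simp

lemma sigma_decomp (σ : MonoidAlgebra ℤ Γ →+* LaurentPolynomial ℤ) (f : MonoidAlgebra ℤ Γ) :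
    σ f = ∑ g ∈ f.coeff.support, (f.coeff g) • σ (MonoidAlgebra.of ℤ Γ g) := by
  have hrepr : f = ∑ g ∈ f.coeff.support, MonoidAlgebra.single g (f.coeff g) := by
    conv_lhs => rw [← MonoidAlgebra.sum_coeff_single f]
    rfl
  conv_lhs => rw [hrepr]
  rw [map_sum]
  apply Finset.sum_congr rfl
  intro g _
  rw [single_eq_smul_of, map_zsmul]

lemma laurent_decomp (φ : LaurentPolynomial ℤ →+* LaurentPolynomial ℤ) (f : LaurentPolynomial ℤ) :
    φ f = ∑ j ∈ f.coeff.support, (f.coeff j) • φ (LaurentPolynomial.T j) := by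
  have hrepr : f = ∑ j ∈ f.coeff.support, AddMonoidAlgebra.single j (f.coeff j) := by
    conv_lhs => rw [← AddMonoidAlgebra.sum_coeff_single f]
    rfl
  conv_lhs => rw [hrepr]
  rw [map_sum]
  apply Finset.sum_congr rfl
  intro j _
  have h1 : (AddMonoidAlgebra.single j (f.coeff j) : LaurentPolynomial ℤ) = (f.coeff j) • LaurentPolynomial.T j := by
    rw [LaurentPolynomial.T, AddMonoidAlgebra.smul_single]
    simp
  rw [h1, map_zsmul]

lemma sigma_of_inv (σ : MonoidAlgebra ℤ Γ →+* LaurentPolynomial ℤ) (g : Γ) {k : ℤ}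
    (h : σ (MonoidAlgebra.of ℤ Γ g) = LaurentPolynomial.T k) :
    σ (MonoidAlgebra.of ℤ Γ g⁻¹) = LaurentPolynomial.T (-k) := by
  have h1 : σ (MonoidAlgebra.of ℤ Γ g) * σ (MonoidAlgebra.of ℤ Γ g⁻¹) = 1 := by
    rw [← map_mul, ← map_mul (MonoidAlgebra.of ℤ Γ), mul_inv_cancel, map_one, map_one]
  calc σ (MonoidAlgebra.of ℤ Γ g⁻¹)
      = σ (MonoidAlgebra.of ℤ Γ g⁻¹) * (LaurentPolynomial.T k * LaurentPolynomial.T (-k)) := by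
        rw [← LaurentPolynomial.T_add]
        simp
    _ = (σ (MonoidAlgebra.of ℤ Γ g) * σ (MonoidAlgebra.of ℤ Γ g⁻¹)) * LaurentPolynomial.T (-k) := by
        rw [h]; ring
    _ = LaurentPolynomial.T (-k) := by rw [h1, one_mul]

lemma neg_support_of (σ : MonoidAlgebra ℤ Γ →+* LaurentPolynomial ℤ) (f : MonoidAlgebra ℤ Γ)
    (h : ∀ g ∈ f.coeff.support, ∃ k : ℤ, k < 0 ∧ σ (MonoidAlgebra.of ℤ Γ g) = LaurentPolynomial.T k) :
    ∀ k ∈ (σ f).coeff.support, k < 0 := by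
  intro k hk
  by_contra hge
  push_neg at hge
  have h0 : (σ f).coeff k = 0 := by
    rw [sigma_decomp, AddMonoidAlgebra.coeff_sum, Finset.sum_apply']
    apply Finset.sum_eq_zero
    intro g hg
    obtain ⟨kg, hkg, heq⟩ := h g hg
    rw [heq, AddMonoidAlgebra.coeff_smul_apply, LaurentPolynomial.T_apply,
      if_neg (by omega)]
    simp
  rw [Finsupp.mem_support_iff] at hk
  exact hk h0

lemma bar_neg_zero (barL : LaurentPolynomial ℤ →+* LaurentPolynomial ℤ)
    (hbarL : ∀ k : ℤ, barL (LaurentPolynomial.T k) = LaurentPolynomial.T (-k))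
    (f : LaurentPolynomial ℤ) (hfix : barL f = f) (hneg : ∀ k ∈ f.coeff.support, k < 0) : f = 0 := by
  have happly : ∀ k : ℤ, (barL f).coeff k = f.coeff (-k) := by
    intro k
    rw [laurent_decomp barL f, AddMonoidAlgebra.coeff_sum, Finset.sum_apply']
    by_cases hmem : -k ∈ f.coeff.support
    · rw [Finset.sum_eq_single (-k)]
      · rw [hbarL, AddMonoidAlgebra.coeff_smul_apply, LaurentPolynomial.T_apply,
          if_pos (by omega)]
        simp
      · intro j hj hjne
        rw [hbarL, AddMonoidAlgebra.coeff_smul_apply, LaurentPolynomial.T_apply,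
          if_neg (by omega)]
        simp
      · intro habs; exact absurd hmem habs
    · rw [Finsupp.notMem_support_iff.mp hmem]
      apply Finset.sum_eq_zero
      intro j hj
      have hjne : -j ≠ k := by
        intro hc
        apply hmem
        rw [show -k = j from by omega]
        exact hj
      rw [hbarL, AddMonoidAlgebra.coeff_smul_apply, LaurentPolynomial.T_apply, if_neg hjne]
      simp
  apply AddMonoidAlgebra.ext
  apply Finsupp.ext
  intro k
  rcases lt_or_ge k 0 with hk | hk
  · have h1 : f.coeff k = f.coeff (-k) := by
      conv_lhs => rw [← hfix]
      exact happly k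
    rw [h1]
    by_contra hne
    have := hneg (-k) (Finsupp.mem_support_iff.mpr hne)
    omega
  · by_contra hne
    have := hneg k (Finsupp.mem_support_iff.mpr hne)
    omega

lemma sigma_ne_zero (σ : MonoidAlgebra ℤ Γ →+* LaurentPolynomial ℤ) (f : MonoidAlgebra ℤ Γ)
    (hf : f ≠ 0)
    (hmono : ∀ g : Γ, ∃ k : ℤ, σ (MonoidAlgebra.of ℤ Γ g) = LaurentPolynomial.T k)
    (hinj : ∀ g ∈ f.coeff.support, ∀ g' ∈ f.coeff.support,
      σ (MonoidAlgebra.of ℤ Γ g) = σ (MonoidAlgebra.of ℤ Γ g') → g = g') :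
    σ f ≠ 0 := by
  obtain ⟨g₀, hg₀⟩ := Finsupp.support_nonempty_iff.mpr (fun h => hf (MonoidAlgebra.coeff_eq_zero.mp h))
  obtain ⟨k₀, hk₀⟩ := hmono g₀
  intro hzero
  have h1 : (σ f).coeff k₀ = f.coeff g₀ := by
    rw [sigma_decomp, AddMonoidAlgebra.coeff_sum, Finset.sum_apply', Finset.sum_eq_single g₀]
    · rw [hk₀, AddMonoidAlgebra.coeff_smul_apply, LaurentPolynomial.T_apply, if_pos rfl]
      simp
    · intro g hg hne
      obtain ⟨kg, hkg⟩ := hmono g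
      rw [hkg, AddMonoidAlgebra.coeff_smul_apply, LaurentPolynomial.T_apply, if_neg]
      · simp
      · intro hc
        exact hne (hinj g hg g₀ hg₀ (by rw [hkg, hk₀, hc]))
    · intro habs; exact absurd hg₀ habs
  rw [hzero] at h1
  rw [Finsupp.mem_support_iff] at hg₀
  exact hg₀ (by rw [← h1]; rfl)

lemma sigma_bar_comm (σ : MonoidAlgebra ℤ Γ →+* LaurentPolynomial ℤ)
    (bar : MonoidAlgebra ℤ Γ →+* MonoidAlgebra ℤ Γ)
    (barL : LaurentPolynomial ℤ →+* LaurentPolynomial ℤ)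
    (hbar : ∀ g : Γ, bar (MonoidAlgebra.of ℤ Γ g) = MonoidAlgebra.of ℤ Γ g⁻¹)
    (hbarL : ∀ k : ℤ, barL (LaurentPolynomial.T k) = LaurentPolynomial.T (-k))
    (hσmono : ∀ g : Γ, ∃ k : ℤ, σ (MonoidAlgebra.of ℤ Γ g) = LaurentPolynomial.T k)
    (f : MonoidAlgebra ℤ Γ) : σ (bar f) = barL (σ f) := by
  induction f using MonoidAlgebra.induction_linear with
  | zero => simp
  | add f h hf hh => rw [map_add, map_add, map_add, map_add, hf, hh]
  | single g c =>
      rw [single_eq_smul_of, map_zsmul, map_zsmul, map_zsmul, map_zsmul, hbar]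
      obtain ⟨k, hk⟩ := hσmono g
      rw [hk, hbarL, sigma_of_inv σ g hk]

end Spec

end StmtAux

/-- let `(W,S)` be a Coxeter group, `Γ` an abelian group with total order given
by the cone `Γ₊` and parameters `v_s ∈ Γ₊`; let `y ≤ w`, `I = [y,w]` a Bruhat interval and
`s = s_b ∈ S`. Suppose `σ : ℤ[Γ] → ℤ[v,v⁻¹]` is a ring homomorphism with `σ(v_s) = v^{L(s)}`
for a weight function `L`, such that `σ(Γ₊^s(I)) ⊆ {v^n : n > 0}`, where `Γ₊^s(I) ⊆ Γ₊`
consists of: inverses of monomials of the `P_{z₁,z₂}` for `z₁ < z₂` in `I`; quotients in `Γ₊`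
of monomials of the `M^s_{z₁,z₂}` for `z₁, z₂ ∈ I`; and inverses of monomials of
`Σ_{z₁ ≤ z < z₂, sz < z} P_{z₁,z} M^s_{z,z₂} − v_s P_{z₁,z₂}` for `z₁, z₂ ∈ I` with
`sz₁ < z₁ < z₂ < sz₂`. Then `σ(P_{z₁,z₂})` is the Kazhdan–Lusztig polynomial of the weight
function `L` for all `z₁ < z₂` in `I`, `σ(M^s_{z₁,z₂})` is the corresponding M-polynomial
whenever `sz₁ < z₁ < z₂ < sz₂`, and `M^s_{z₁,z₂} ≠ 0` implies the specialization is `≠ 0`. -/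
theorem stmt15 {B W : Type*} [Group W] {Mat : CoxeterMatrix B} (cs : CoxeterSystem Mat W)
    (Γ : Type*) [CommGroup Γ] (Γplus : Set Γ) (hcone : IsPositiveCone Γplus)
    (vs : B → Γ) (hvs : ∀ b, vs b ∈ Γplus)
    (hconj : ∀ b b', IsConj (cs.simple b) (cs.simple b') → vs b = vs b')
    -- the bar involutions of `ℤ[Γ]` and of `ℤ[v,v⁻¹]`
    (bar : MonoidAlgebra ℤ Γ →+* MonoidAlgebra ℤ Γ)
    (hbar : ∀ g : Γ, bar (MonoidAlgebra.of ℤ Γ g) = MonoidAlgebra.of ℤ Γ g⁻¹)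
    (barL : LaurentPolynomial ℤ →+* LaurentPolynomial ℤ)
    (hbarL : ∀ k : ℤ, barL (LaurentPolynomial.T k) = LaurentPolynomial.T (-k))
    -- finiteness of Bruhat intervals
    (hfin : ∀ x w : W, {y : W | bruhatLE cs x y ∧ bruhatLE cs y w}.Finite)
    -- the generic R-, Kazhdan–Lusztig and M-polynomials attached to `Γ₊ ⊆ Γ`
    (rp P Mp : W → W → MonoidAlgebra ℤ Γ) (b : B)
    (hrp : IsRPolFamily cs (fun b => MonoidAlgebra.of ℤ Γ (vs b))
      (fun b => MonoidAlgebra.of ℤ Γ (vs b)⁻¹) rp)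
    (hP : IsKLFamily cs bar (fun f => ∀ g ∈ f.coeff.support, g⁻¹ ∈ Γplus) rp P hfin)
    (hMp : IsMFamily cs bar (fun f => ∀ g ∈ f.coeff.support, g⁻¹ ∈ Γplus)
      (MonoidAlgebra.of ℤ Γ (vs b)) b P Mp hfin)
    -- a weight function `L`
    (L : W → ℤ)
    (hL : ∀ w w' : W, cs.length (w * w') = cs.length w + cs.length w' →
      L (w * w') = L w + L w')
    (hLpos : ∀ b, 0 < L (cs.simple b))
    -- the R-, Kazhdan–Lusztig and M-polynomials of the Iwahori–Hecke algebra with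
    -- parameters `v^{L(s)}`
    (Rl pl ml : W → W → LaurentPolynomial ℤ)
    (hRl : IsRPolFamily cs (fun b => LaurentPolynomial.T (L (cs.simple b)))
      (fun b => LaurentPolynomial.T (-L (cs.simple b))) Rl)
    (hpl : IsKLFamily cs barL (fun f => ∀ k ∈ f.coeff.support, k < 0) Rl pl hfin)
    (hml : IsMFamily cs barL (fun f => ∀ k ∈ f.coeff.support, k < 0)
      (LaurentPolynomial.T (L (cs.simple b))) b pl ml hfin)
    -- the specialization `σ : ℤ[Γ] → ℤ[v,v⁻¹]`, `v_s ↦ v^{L(s)}`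
    (σ : MonoidAlgebra ℤ Γ →+* LaurentPolynomial ℤ)
    (hσmono : ∀ g : Γ, ∃ k : ℤ, σ (MonoidAlgebra.of ℤ Γ g) = LaurentPolynomial.T k)
    (hσ : ∀ b, σ (MonoidAlgebra.of ℤ Γ (vs b)) = LaurentPolynomial.T (L (cs.simple b)))
    -- the Bruhat interval `I = [y, w]`
    (y w : W) (hyw : bruhatLE cs y w)
    -- condition (∗): `σ(Γ₊^s(I)) ⊆ {v^n : n > 0}`
    (hA : ∀ z₁ z₂ : W, bruhatLE cs y z₁ → bruhatLE cs z₁ w →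
      bruhatLE cs y z₂ → bruhatLE cs z₂ w → bruhatLE cs z₁ z₂ → z₁ ≠ z₂ →
      ∀ g ∈ (P z₁ z₂).coeff.support, g⁻¹ ∈ Γplus →
        ∃ n : ℤ, 0 < n ∧ σ (MonoidAlgebra.of ℤ Γ g⁻¹) = LaurentPolynomial.T n)
    (hB : ∀ z₁ z₂ : W, bruhatLE cs y z₁ → bruhatLE cs z₁ w →
      bruhatLE cs y z₂ → bruhatLE cs z₂ w →
      ∀ g ∈ (Mp z₁ z₂).coeff.support, ∀ g' ∈ (Mp z₁ z₂).coeff.support, g'⁻¹ * g ∈ Γplus →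
        ∃ n : ℤ, 0 < n ∧ σ (MonoidAlgebra.of ℤ Γ (g'⁻¹ * g)) = LaurentPolynomial.T n)
    (hC : ∀ z₁ z₂ : W, bruhatLE cs y z₁ → bruhatLE cs z₁ w →
      bruhatLE cs y z₂ → bruhatLE cs z₂ w →
      cs.length (cs.simple b * z₁) < cs.length z₁ → bruhatLE cs z₁ z₂ → z₁ ≠ z₂ →
      cs.length z₂ < cs.length (cs.simple b * z₂) →
      ∀ g ∈ ((∑ z ∈ (hfin z₁ z₂).toFinset.filter
          (fun z => z ≠ z₂ ∧ cs.length (cs.simple b * z) < cs.length z),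
          P z₁ z * Mp z z₂) - MonoidAlgebra.of ℤ Γ (vs b) * P z₁ z₂).coeff.support,
        g⁻¹ ∈ Γplus →
        ∃ n : ℤ, 0 < n ∧ σ (MonoidAlgebra.of ℤ Γ g⁻¹) = LaurentPolynomial.T n) :
    (∀ z₁ z₂ : W, bruhatLE cs y z₁ → bruhatLE cs z₁ w →
      bruhatLE cs y z₂ → bruhatLE cs z₂ w → bruhatLE cs z₁ z₂ →
      σ (P z₁ z₂) = pl z₁ z₂) ∧
    (∀ z₁ z₂ : W, bruhatLE cs y z₁ → bruhatLE cs z₁ w →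
      bruhatLE cs y z₂ → bruhatLE cs z₂ w →
      cs.length (cs.simple b * z₁) < cs.length z₁ → bruhatLE cs z₁ z₂ → z₁ ≠ z₂ →
      cs.length z₂ < cs.length (cs.simple b * z₂) →
      σ (Mp z₁ z₂) = ml z₁ z₂ ∧ (Mp z₁ z₂ ≠ 0 → ml z₁ z₂ ≠ 0)) := by
  classical
  obtain ⟨hrp1, hrp2, hrp3, hrp4⟩ := hrp
  obtain ⟨hRl1, hRl2, hRl3, hRl4⟩ := hRl
  obtain ⟨hP1, hP2, hP3, hP4⟩ := hP
  obtain ⟨hpl1, hpl2, hpl3, hpl4⟩ := hpl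
  obtain ⟨hMp1, hMp2⟩ := hMp
  obtain ⟨hml1, hml2⟩ := hml
  have hcomm : ∀ f, σ (bar f) = barL (σ f) :=
    StmtAux.sigma_bar_comm σ bar barL hbar hbarL hσmono
  -- R-polynomial transfer
  have hR : ∀ n : ℕ, ∀ w' : W, cs.length w' ≤ n → ∀ y' : W, σ (rp y' w') = Rl y' w' := by
    intro n
    induction n using Nat.strong_induction_on with
    | _ n ihn =>
    intro w' hw' y'
    by_cases hw1 : w' = 1
    · subst hw1
      by_cases hy1 : y' = 1
      · subst hy1; rw [hrp2, hRl2, map_one]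
      · have hnb : ¬ bruhatLE cs y' 1 := fun hc => hy1 (StmtAux.bruhat_le_one cs hc)
        rw [hrp3 y' 1 hnb, hRl3 y' 1 hnb, map_zero]
    · obtain ⟨b₀, hb₀⟩ := cs.exists_leftDescent_of_ne_one hw1
      have hdesc : cs.length (cs.simple b₀ * w') < cs.length w' := hb₀
      have hmeas : cs.length (cs.simple b₀ * w') < n := by omega
      have hr4 := hrp4 b₀ y' w' hdesc
      have hl4 := hRl4 b₀ y' w' hdesc
      rcases cs.length_simple_mul y' b₀ with hup | hdown
      · have h1 := hr4.2 (by omega)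
        have h2 := hl4.2 (by omega)
        rw [h1, h2, map_add, map_mul, map_sub]
        rw [hσ b₀, StmtAux.sigma_of_inv σ (vs b₀) (hσ b₀)]
        rw [ihn _ hmeas _ (le_refl _) (cs.simple b₀ * y'),
          ihn _ hmeas _ (le_refl _) y']
      · have h1 := hr4.1 (by omega)
        have h2 := hl4.1 (by omega)
        rw [h1, h2, ihn _ hmeas _ (le_refl _) (cs.simple b₀ * y')]
  have hRfull : ∀ y' w' : W, σ (rp y' w') = Rl y' w' := fun y' w' =>
    hR (cs.length w') w' (le_refl _) y'
  -- support of σ (P z₁ z₂) is negative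
  have hsuppP : ∀ z₁ z₂ : W, bruhatLE cs y z₁ → bruhatLE cs z₁ w →
      bruhatLE cs y z₂ → bruhatLE cs z₂ w → bruhatLE cs z₁ z₂ → z₁ ≠ z₂ →
      ∀ k ∈ (σ (P z₁ z₂)).coeff.support, k < 0 := by
    intro z₁ z₂ h1 h2 h3 h4 h5 h6
    apply StmtAux.neg_support_of
    intro g hg
    have hginv : g⁻¹ ∈ Γplus := hP3 z₁ z₂ h5 h6 g hg
    obtain ⟨nA, hnApos, hAeq⟩ := hA z₁ z₂ h1 h2 h3 h4 h5 h6 g hg hginv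
    have hres : σ (MonoidAlgebra.of ℤ Γ g) = LaurentPolynomial.T (-nA) := by
      have h7 := StmtAux.sigma_of_inv σ g⁻¹ hAeq
      rwa [inv_inv] at h7
    exact ⟨-nA, by omega, hres⟩
  -- P-polynomial transfer
  have hPmain : ∀ n : ℕ, ∀ z₁ z₂ : W, bruhatLE cs y z₁ → bruhatLE cs z₁ w →
      bruhatLE cs y z₂ → bruhatLE cs z₂ w → bruhatLE cs z₁ z₂ →
      cs.length z₂ ≤ cs.length z₁ + n → σ (P z₁ z₂) = pl z₁ z₂ := by
    intro n
    induction n using Nat.strong_induction_on with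
    | _ n ihn =>
    intro z₁ z₂ hyz₁ hz₁w hyz₂ hz₂w hz12 hlen
    by_cases heq : z₁ = z₂
    · subst heq; rw [hP1, hpl1, map_one]
    · have hlt : cs.length z₁ < cs.length z₂ := StmtAux.bruhat_length_lt cs hz12 heq
      have hterm : ∀ z ∈ (hfin z₁ z₂).toFinset, z ≠ z₁ → σ (P z z₂) = pl z z₂ := by
        intro z hz hzne
        rw [Set.Finite.mem_toFinset] at hz
        obtain ⟨ha, hb⟩ := hz
        have hyz : bruhatLE cs y z := StmtAux.bruhat_trans cs hyz₁ ha
        have hzw : bruhatLE cs z w := StmtAux.bruhat_trans cs hb hz₂w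
        have hzlt : cs.length z₁ < cs.length z :=
          StmtAux.bruhat_length_lt cs ha (fun hc => hzne hc.symm)
        exact ihn (n-1) (by omega) z z₂ hyz hzw hyz₂ hz₂w hb (by omega)
      have hbar1 : barL (σ (P z₁ z₂))
          = ∑ z ∈ (hfin z₁ z₂).toFinset, Rl z₁ z * σ (P z z₂) := by
        rw [← hcomm, hP4 z₁ z₂ hz12, map_sum]
        apply Finset.sum_congr rfl
        intro z _
        rw [map_mul, hRfull z₁ z]
      have hbar2 : barL (pl z₁ z₂)
          = ∑ z ∈ (hfin z₁ z₂).toFinset, Rl z₁ z * pl z z₂ := hpl4 z₁ z₂ hz12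
      have hz₁T : z₁ ∈ (hfin z₁ z₂).toFinset := by
        rw [Set.Finite.mem_toFinset]
        exact ⟨StmtAux.bruhat_refl cs z₁, hz12⟩
      have hbard : barL (σ (P z₁ z₂) - pl z₁ z₂) = σ (P z₁ z₂) - pl z₁ z₂ := by
        rw [map_sub, hbar1, hbar2, ← Finset.sum_sub_distrib]
        rw [Finset.sum_congr rfl
          (fun z _ => (mul_sub (Rl z₁ z) (σ (P z z₂)) (pl z z₂)).symm)]
        rw [Finset.sum_eq_single z₁]
        · rw [hRl2, one_mul]
        · intro z hz hzne
          rw [hterm z hz hzne, sub_self, mul_zero]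
        · intro habs; exact absurd hz₁T habs
      have hneg : ∀ k ∈ (σ (P z₁ z₂) - pl z₁ z₂).coeff.support, k < 0 := by
        intro k hk
        have hk' := Finsupp.mem_support_iff.mp hk
        rw [AddMonoidAlgebra.coeff_sub, Finsupp.sub_apply] at hk'
        rcases ne_or_eq ((σ (P z₁ z₂)).coeff k) 0 with hne | he
        · exact hsuppP z₁ z₂ hyz₁ hz₁w hyz₂ hz₂w hz12 heq k (Finsupp.mem_support_iff.mpr hne)
        · have hne2 : (pl z₁ z₂).coeff k ≠ 0 := by
            rw [he] at hk'; simpa using hk'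
          exact hpl3 z₁ z₂ hz12 heq k (Finsupp.mem_support_iff.mpr hne2)
      have hzero := StmtAux.bar_neg_zero barL hbarL _ hbard hneg
      exact sub_eq_zero.mp hzero
  have hPfull : ∀ z₁ z₂ : W, bruhatLE cs y z₁ → bruhatLE cs z₁ w →
      bruhatLE cs y z₂ → bruhatLE cs z₂ w → bruhatLE cs z₁ z₂ →
      σ (P z₁ z₂) = pl z₁ z₂ := fun z₁ z₂ h1 h2 h3 h4 h5 =>
    hPmain (cs.length z₂) z₁ z₂ h1 h2 h3 h4 h5 (by omega)
  -- M-polynomial transfer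
  have hMmain : ∀ n : ℕ, ∀ z₁ z₂ : W, bruhatLE cs y z₁ → bruhatLE cs z₁ w →
      bruhatLE cs y z₂ → bruhatLE cs z₂ w →
      cs.length (cs.simple b * z₁) < cs.length z₁ → bruhatLE cs z₁ z₂ → z₁ ≠ z₂ →
      cs.length z₂ < cs.length (cs.simple b * z₂) →
      cs.length z₂ ≤ cs.length z₁ + n → σ (Mp z₁ z₂) = ml z₁ z₂ := by
    intro n
    induction n using Nat.strong_induction_on with
    | _ n ihn =>
    intro z₁ z₂ hyz₁ hz₁w hyz₂ hz₂w hdesc hz12 hne hasc hlen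
    have hlt : cs.length z₁ < cs.length z₂ := StmtAux.bruhat_length_lt cs hz12 hne
    have hz₁F : z₁ ∈ (hfin z₁ z₂).toFinset.filter
        (fun z => z ≠ z₂ ∧ cs.length (cs.simple b * z) < cs.length z) := by
      rw [Finset.mem_filter, Set.Finite.mem_toFinset]
      exact ⟨⟨StmtAux.bruhat_refl cs z₁, hz12⟩, hne, hdesc⟩
    have htermP : ∀ z ∈ (hfin z₁ z₂).toFinset.filter
        (fun z => z ≠ z₂ ∧ cs.length (cs.simple b * z) < cs.length z),
        σ (P z₁ z) = pl z₁ z := by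
      intro z hz
      rw [Finset.mem_filter, Set.Finite.mem_toFinset] at hz
      obtain ⟨⟨ha, hb'⟩, _, _⟩ := hz
      exact hPfull z₁ z hyz₁ hz₁w (StmtAux.bruhat_trans cs hyz₁ ha)
        (StmtAux.bruhat_trans cs hb' hz₂w) ha
    have htermM : ∀ z ∈ (hfin z₁ z₂).toFinset.filter
        (fun z => z ≠ z₂ ∧ cs.length (cs.simple b * z) < cs.length z), z ≠ z₁ →
        σ (Mp z z₂) = ml z z₂ := by
      intro z hz hzne
      rw [Finset.mem_filter, Set.Finite.mem_toFinset] at hz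
      obtain ⟨⟨ha, hb'⟩, hz2ne, hzdesc⟩ := hz
      have hyz : bruhatLE cs y z := StmtAux.bruhat_trans cs hyz₁ ha
      have hzw : bruhatLE cs z w := StmtAux.bruhat_trans cs hb' hz₂w
      have hzlt : cs.length z₁ < cs.length z :=
        StmtAux.bruhat_length_lt cs ha (fun hc => hzne hc.symm)
      exact ihn (n-1) (by omega) z z₂ hyz hzw hyz₂ hz₂w hzdesc hb' hz2ne hasc (by omega)
    have hbard : barL (σ (Mp z₁ z₂) - ml z₁ z₂) = σ (Mp z₁ z₂) - ml z₁ z₂ := by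
      rw [map_sub, ← hcomm, hMp1 z₁ z₂, hml1 z₁ z₂]
    have hDγσ : σ ((∑ z ∈ (hfin z₁ z₂).toFinset.filter
          (fun z => z ≠ z₂ ∧ cs.length (cs.simple b * z) < cs.length z),
          P z₁ z * Mp z z₂) - MonoidAlgebra.of ℤ Γ (vs b) * P z₁ z₂)
        = (∑ z ∈ (hfin z₁ z₂).toFinset.filter
          (fun z => z ≠ z₂ ∧ cs.length (cs.simple b * z) < cs.length z),
          pl z₁ z * σ (Mp z z₂)) - LaurentPolynomial.T (L (cs.simple b)) * pl z₁ z₂ := by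
      rw [map_sub, map_sum, map_mul, hσ b,
        hPfull z₁ z₂ hyz₁ hz₁w hyz₂ hz₂w hz12]
      congr 1
      apply Finset.sum_congr rfl
      intro z hz
      rw [map_mul, htermP z hz]
    have hdiff : σ ((∑ z ∈ (hfin z₁ z₂).toFinset.filter
          (fun z => z ≠ z₂ ∧ cs.length (cs.simple b * z) < cs.length z),
          P z₁ z * Mp z z₂) - MonoidAlgebra.of ℤ Γ (vs b) * P z₁ z₂)
        - ((∑ z ∈ (hfin z₁ z₂).toFinset.filter
          (fun z => z ≠ z₂ ∧ cs.length (cs.simple b * z) < cs.length z),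
          pl z₁ z * ml z z₂) - LaurentPolynomial.T (L (cs.simple b)) * pl z₁ z₂)
        = σ (Mp z₁ z₂) - ml z₁ z₂ := by
      rw [hDγσ]
      rw [show ∀ A B C : LaurentPolynomial ℤ, (A - C) - (B - C) = A - B from
        fun A B C => by ring]
      rw [← Finset.sum_sub_distrib]
      rw [Finset.sum_congr rfl
        (fun z _ => (mul_sub (pl z₁ z) (σ (Mp z z₂)) (ml z z₂)).symm)]
      rw [Finset.sum_eq_single z₁]
      · rw [hpl1, one_mul]
      · intro z hz hzne
        rw [htermM z hz hzne, sub_self, mul_zero]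
      · intro habs; exact absurd hz₁F habs
    have hneg : ∀ k ∈ (σ (Mp z₁ z₂) - ml z₁ z₂).coeff.support, k < 0 := by
      intro k hk
      rw [← hdiff] at hk
      have hk' := Finsupp.mem_support_iff.mp hk
      rw [AddMonoidAlgebra.coeff_sub, Finsupp.sub_apply] at hk'
      rcases ne_or_eq ((σ ((∑ z ∈ (hfin z₁ z₂).toFinset.filter
          (fun z => z ≠ z₂ ∧ cs.length (cs.simple b * z) < cs.length z),
          P z₁ z * Mp z z₂) - MonoidAlgebra.of ℤ Γ (vs b) * P z₁ z₂)).coeff k) 0 with hne' | he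
      · refine StmtAux.neg_support_of σ _ ?_ k (Finsupp.mem_support_iff.mpr hne')
        intro g hg
        have hginv : g⁻¹ ∈ Γplus := hMp2 z₁ z₂ hdesc hz12 hne hasc g hg
        obtain ⟨nC, hnC, hCeq⟩ := hC z₁ z₂ hyz₁ hz₁w hyz₂ hz₂w hdesc hz12 hne hasc g hg hginv
        have hres : σ (MonoidAlgebra.of ℤ Γ g) = LaurentPolynomial.T (-nC) := by
          have h7 := StmtAux.sigma_of_inv σ g⁻¹ hCeq
          rwa [inv_inv] at h7
        exact ⟨-nC, by omega, hres⟩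
      · have hne2 : (((∑ z ∈ (hfin z₁ z₂).toFinset.filter
            (fun z => z ≠ z₂ ∧ cs.length (cs.simple b * z) < cs.length z),
            pl z₁ z * ml z z₂) - LaurentPolynomial.T (L (cs.simple b)) * pl z₁ z₂ :
            LaurentPolynomial ℤ)).coeff k ≠ 0 := by
          rw [he, zero_sub, neg_ne_zero] at hk'; exact hk'
        exact hml2 z₁ z₂ hdesc hz12 hne hasc k (Finsupp.mem_support_iff.mpr hne2)
    have hzero := StmtAux.bar_neg_zero barL hbarL _ hbard hneg
    exact sub_eq_zero.mp hzero
  have hMfull : ∀ z₁ z₂ : W, bruhatLE cs y z₁ → bruhatLE cs z₁ w →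
      bruhatLE cs y z₂ → bruhatLE cs z₂ w →
      cs.length (cs.simple b * z₁) < cs.length z₁ → bruhatLE cs z₁ z₂ → z₁ ≠ z₂ →
      cs.length z₂ < cs.length (cs.simple b * z₂) → σ (Mp z₁ z₂) = ml z₁ z₂ :=
    fun z₁ z₂ h1 h2 h3 h4 h5 h6 h7 h8 =>
      hMmain (cs.length z₂) z₁ z₂ h1 h2 h3 h4 h5 h6 h7 h8 (by omega)
  refine ⟨fun z₁ z₂ h1 h2 h3 h4 h5 => hPfull z₁ z₂ h1 h2 h3 h4 h5, ?_⟩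
  intro z₁ z₂ h1 h2 h3 h4 h5 h6 h7 h8
  refine ⟨hMfull z₁ z₂ h1 h2 h3 h4 h5 h6 h7 h8, ?_⟩
  intro hne0
  rw [← hMfull z₁ z₂ h1 h2 h3 h4 h5 h6 h7 h8]
  apply StmtAux.sigma_ne_zero σ _ hne0 hσmono
  intro g hg g' hg' hσeq
  by_contra hgne
  have hσq : ∀ a a' : Γ, σ (MonoidAlgebra.of ℤ Γ a) = σ (MonoidAlgebra.of ℤ Γ a') →
      σ (MonoidAlgebra.of ℤ Γ (a'⁻¹ * a)) = 1 := by
    intro a a' hσa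
    obtain ⟨k', hk'⟩ := hσmono a'
    rw [map_mul (MonoidAlgebra.of ℤ Γ), map_mul, StmtAux.sigma_of_inv σ a' hk', hσa, hk',
      ← LaurentPolynomial.T_add]
    simp
  rcases hcone.2.1 (g'⁻¹ * g) with hpos | hone | hneg'
  · obtain ⟨nq, hnq, heq⟩ := hB z₁ z₂ h1 h2 h3 h4 g hg g' hg' hpos
    rw [hσq g g' hσeq] at heq
    have h0 : (0 : ℤ) = nq := StmtAux.T_inj (by rw [← heq]; simp)
    omega
  · exact hgne (inv_mul_eq_one.mp hone).symm
  · have hpos' : g⁻¹ * g' ∈ Γplus := by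
      have : (g'⁻¹ * g)⁻¹ = g⁻¹ * g' := by group
      rwa [this] at hneg'
    obtain ⟨nq, hnq, heq⟩ := hB z₁ z₂ h1 h2 h3 h4 g' hg' g hg hpos'
    rw [hσq g' g hσeq.symm] at heq
    have h0 : (0 : ℤ) = nq := StmtAux.T_inj (by rw [← heq]; simp)
    omega
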